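/- arXiv:2009.10450 — 2 statements merged into one kernel-verified Lean document; each statement's English description precedes it below -/
import Mathlib

section
/- (Corollary 2.1, part (1): NCQTE asymptotic variance). Almost surely, E[φ₂² | σ(X₁)] = E[ (m₁(X) − m₀(X))² + σ²_{τ,1}(X)/p(X) + σ²_{τ,0}(X)/(1−p(X)) | σ(X₁) ], where σ²_{τ,j}(X) = E[η_j(Y(j))² | σ(X)] − m_j(X)² is the conditional variance of η_j(Y(j)) given σ(X). -/
/-!
With `a := m₁(X) (1 - p(X)) + m₀(X) p(X)` the score is
`φ₂ = D (η₁(Y(1)) - a) / p(X) - (1 - D) (η₀(Y(0)) - a) / (1 - p(X))`, whose square has no cross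
term because `D (1 - D) = 0`. Given `σ(X)`, unconfoundedness factors `E[D g | σ(X)]` as
`p(X) E[g | σ(X)]` for `g = η₁(Y(1)), η₁(Y(1))²` (both affine in `1{Y(1) ≤ q₁}`), and likewise for
`1 - D` and `η₀(Y(0))`. So the treated arm contributes `(σ²_{τ,1}(X) + (m₁(X) - a)²) / p(X)`, the
control arm `(σ²_{τ,0}(X) + (m₀(X) - a)²) / (1 - p(X))`, and
`(m₁ - a)² / p + (m₀ - a)² / (1 - p) = (m₁ - m₀)²`. The tower property then passes to `σ(X₁)`.
-/

open MeasureTheory ProbabilityTheory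

lemma sq_treatment_score_eq {d p n m₁ m₀ z₁ z₀ : ℝ} (hd : d = 0 ∨ d = 1) (hp : p ≠ 0)
    (hp' : 1 - p ≠ 0) (hn : n = m₁ / p + m₀ / (1 - p)) :
    (d / p * z₁ - (1 - d) / (1 - p) * z₀ - n * (d - p)) ^ 2 =
      p⁻¹ ^ 2 * (d * (z₁ - (m₁ * (1 - p) + m₀ * p)) ^ 2)
        + (1 - p)⁻¹ ^ 2 * ((1 - d) * (z₀ - (m₁ * (1 - p) + m₀ * p)) ^ 2) := by
  subst hn
  rcases hd with rfl | rfl <;> field_simp <;> ring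

lemma sq_affine_indicator {Ω : Type*} (s : Set Ω) (a b : ℝ) :
    (fun ω => a * s.indicator 1 ω + b) ^ 2 =
      fun ω => (a ^ 2 + 2 * a * b) * s.indicator 1 ω + b ^ 2 := by
  ext ω
  by_cases h : ω ∈ s <;> simp [h]
  ring

lemma abs_affine_indicator_le {Ω : Type*} (s : Set Ω) (a b : ℝ) (ω : Ω) :
    |a * s.indicator 1 ω + b| ≤ |a| + |b| := by
  by_cases h : ω ∈ s <;> simp [h, abs_add_le]

lemma abs_mul_one_sub_add_mul_le {x y p C : ℝ} (hx : |x| ≤ C) (hy : |y| ≤ C) (hp₀ : 0 ≤ p)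
    (hp₁ : p ≤ 1) : |x * (1 - p) + y * p| ≤ C :=
  calc |x * (1 - p) + y * p| ≤ |x| * (1 - p) + |y| * p := by
        refine (abs_add_le _ _).trans_eq ?_
        rw [abs_mul, abs_mul, abs_of_nonneg (sub_nonneg.mpr hp₁), abs_of_nonneg hp₀]
    _ ≤ C * (1 - p) + C * p := by gcongr
    _ = C := by ring

section CondExp

variable {Ω : Type*} {m mΩ : MeasurableSpace Ω} {μ : Measure Ω}

lemma condExp_one_sub (hm : m ≤ mΩ) [IsFiniteMeasure μ] {f : Ω → ℝ} (hf : Integrable f μ) :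
    μ[1 - f|m] =ᵐ[μ] 1 - μ[f|m] := by
  have h1 : μ[(1 : Ω → ℝ)|m] = 1 := condExp_const hm (1 : ℝ)
  have hone : Integrable (1 : Ω → ℝ) μ := integrable_const 1
  conv_rhs => rw [← h1]
  exact condExp_sub hone hf m

lemma condExp_mul_affine_of_condExp_mul (hm : m ≤ mΩ) [IsFiniteMeasure μ] {W Z : Ω → ℝ}
    (hW : Integrable W μ) (hZ : Integrable Z μ) (hWZ : Integrable (W * Z) μ)
    (h : μ[W * Z|m] =ᵐ[μ] μ[W|m] * μ[Z|m]) (a b : ℝ) :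
    μ[W * fun ω => a * Z ω + b|m] =ᵐ[μ] μ[W|m] * μ[fun ω => a * Z ω + b|m] := by
  have hsplit : (W * fun ω => a * Z ω + b) = a • (W * Z) + b • W := by
    ext ω; simp only [Pi.mul_apply, Pi.add_apply, Pi.smul_apply, smul_eq_mul]; ring
  have haffine : (fun ω => a * Z ω + b) = a • Z + fun _ => b := rfl
  rw [hsplit, haffine]
  filter_upwards [condExp_add (hWZ.smul a) (hW.smul b) m, condExp_smul a (W * Z) m,
    condExp_smul b W m, condExp_add (hZ.smul a) (integrable_const b) m, condExp_smul a Z m, h]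
    with ω h₁ h₂ h₃ h₄ h₅ h₆
  simp only [Pi.add_apply, Pi.mul_apply, Pi.smul_apply, smul_eq_mul] at h₁ h₂ h₃ h₄ h₅ h₆ ⊢
  rw [h₁, h₂, h₃, h₄, h₅, h₆, condExp_const hm]
  ring

lemma ProbabilityTheory.CondIndepFun.condExp_mul_indicator_preimage [StandardBorelSpace Ω]
    [IsFiniteMeasure μ] {hm : m ≤ mΩ} {β : Type*} [MeasurableSpace β] {Y : Ω → β} {W : Ω → ℝ}
    (hY : Measurable Y) (hW : Measurable W) (hW01 : ∀ ω, W ω = 0 ∨ W ω = 1)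
    (h : CondIndepFun m hm Y W μ) {s : Set β} (hs : MeasurableSet s) :
    μ[W * (Y ⁻¹' s).indicator 1|m] =ᵐ[μ] μ[W|m] * μ[(Y ⁻¹' s).indicator 1|m] := by
  have hprod : W * (Y ⁻¹' s).indicator 1 = (Y ⁻¹' s ∩ W ⁻¹' {1}).indicator 1 := by
    ext ω
    rcases hW01 ω with h | h <;> by_cases hy : Y ω ∈ s <;> simp [h, hy]
  have hW_ind : W = (W ⁻¹' {1}).indicator fun _ => 1 := by
    ext ω; rcases hW01 ω with h | h <;> simp [h]
  have key := (condIndepFun_iff_condExp_inter_preimage_eq_mul hY hW).mp h s {1} hs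
    (measurableSet_singleton 1)
  rw [← hW_ind] at key
  rw [hprod, mul_comm]
  exact key

lemma ProbabilityTheory.CondIndepFun.condExp_mul_affine_indicator_preimage [StandardBorelSpace Ω]
    [IsFiniteMeasure μ] {hm : m ≤ mΩ} {β : Type*} [MeasurableSpace β] {Y : Ω → β} {W : Ω → ℝ}
    (hY : Measurable Y) (hW : Measurable W) (hW01 : ∀ ω, W ω = 0 ∨ W ω = 1)
    (h : CondIndepFun m hm Y W μ) {s : Set β} (hs : MeasurableSet s) (a b : ℝ) :
    μ[W * fun ω => a * (Y ⁻¹' s).indicator 1 ω + b|m] =ᵐ[μ]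
      μ[W|m] * μ[fun ω => a * (Y ⁻¹' s).indicator 1 ω + b|m] := by
  have hW1 : ∀ᵐ ω ∂μ, ‖W ω‖ ≤ 1 := ae_of_all _ fun ω => by rcases hW01 ω with h | h <;> simp [h]
  have hI : Integrable ((Y ⁻¹' s).indicator 1) μ :=
    (integrable_const (1 : ℝ)).indicator (hY hs)
  exact condExp_mul_affine_of_condExp_mul hm (.of_bound hW.aestronglyMeasurable 1 hW1) hI
    (hI.bdd_mul hW.aestronglyMeasurable hW1)
    (h.condExp_mul_indicator_preimage hY hW hW01 hs) a b

lemma condExp_mul_sq_sub_eq (hm : m ≤ mΩ) [IsFiniteMeasure μ] {W Z a : Ω → ℝ} {C : ℝ}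
    (hW : Integrable W μ) (hWZ : Integrable (W * Z) μ) (hWZ2 : Integrable (W * Z ^ 2) μ)
    (ha : StronglyMeasurable[m] a) (haC : ∀ᵐ ω ∂μ, |a ω| ≤ C)
    (h₁ : μ[W * Z|m] =ᵐ[μ] μ[W|m] * μ[Z|m]) (h₂ : μ[W * Z ^ 2|m] =ᵐ[μ] μ[W|m] * μ[Z ^ 2|m]) :
    μ[W * (Z - a) ^ 2|m] =ᵐ[μ] μ[W|m] * (μ[Z ^ 2|m] - μ[Z|m] ^ 2 + (μ[Z|m] - a) ^ 2) := by
  set b : Ω → ℝ := fun ω => -2 * a ω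
  have hb : StronglyMeasurable[m] b := ha.const_mul (-2)
  have ha2 : StronglyMeasurable[m] (a ^ 2) := ha.pow 2
  have hbC : ∀ᵐ ω ∂μ, ‖b ω‖ ≤ 2 * C := haC.mono fun ω h => by
    rw [Real.norm_eq_abs, abs_mul, abs_neg, abs_two]
    linarith
  have ha2C : ∀ᵐ ω ∂μ, ‖(a ^ 2) ω‖ ≤ C ^ 2 := haC.mono fun ω h => by
    simp only [Pi.pow_apply, norm_pow, Real.norm_eq_abs]
    exact pow_le_pow_left₀ (abs_nonneg _) h 2
  have hbWZ : Integrable (b * (W * Z)) μ :=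
    hWZ.bdd_mul (hb.mono hm).aestronglyMeasurable hbC
  have ha2W : Integrable (a ^ 2 * W) μ := hW.bdd_mul (ha2.mono hm).aestronglyMeasurable ha2C
  have hsplit : W * (Z - a) ^ 2 = W * Z ^ 2 + (b * (W * Z) + a ^ 2 * W) := by
    ext ω; simp only [b, Pi.mul_apply, Pi.add_apply, Pi.sub_apply, Pi.pow_apply]; ring
  rw [hsplit]
  filter_upwards [condExp_add hWZ2 (hbWZ.add ha2W) m, condExp_add hbWZ ha2W m,
    condExp_stronglyMeasurable_mul_of_bound hm hb hWZ _ hbC,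
    condExp_stronglyMeasurable_mul_of_bound hm ha2 hW _ ha2C, h₁, h₂] with ω e₁ e₂ e₃ e₄ e₅ e₆
  simp only [Pi.add_apply, Pi.mul_apply, Pi.sub_apply, Pi.pow_apply] at e₁ e₂ e₃ e₄ e₅ e₆ ⊢
  rw [e₁, e₂, e₃, e₄, e₅, e₆]
  ring

lemma integrable_mul_sq_sub_of_abs_le [IsFiniteMeasure μ] {W Z a : Ω → ℝ} {C : ℝ}
    (hW : Measurable W) (hW1 : ∀ ω, |W ω| ≤ 1) (hZ : Measurable Z) (hZC : ∀ ω, |Z ω| ≤ C)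
    (ha : Measurable a) (haC : ∀ᵐ ω ∂μ, |a ω| ≤ C) : Integrable (W * (Z - a) ^ 2) μ := by
  refine .of_bound (by fun_prop) ((2 * C) ^ 2) (haC.mono fun ω h => ?_)
  simp only [Pi.mul_apply, Pi.pow_apply, Pi.sub_apply, Real.norm_eq_abs, abs_mul, abs_pow]
  calc |W ω| * |Z ω - a ω| ^ 2 ≤ 1 * (2 * C) ^ 2 := by
        gcongr
        · exact hW1 ω
        · exact (abs_sub _ _).trans (by linarith [hZC ω])
    _ = (2 * C) ^ 2 := one_mul _

lemma condExp_inv_sq_mul_mul_sq_sub (hm : m ≤ mΩ) [IsFiniteMeasure μ] {W Z a q : Ω → ℝ}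
    {c C : ℝ} (hc : 0 < c) (hW : Measurable W) (hW1 : ∀ ω, |W ω| ≤ 1)
    (hZ : Measurable Z) (hZC : ∀ ω, |Z ω| ≤ C)
    (ha : StronglyMeasurable[m] a) (haC : ∀ᵐ ω ∂μ, |a ω| ≤ C)
    (hq : StronglyMeasurable[m] q) (hqc : ∀ᵐ ω ∂μ, c ≤ q ω) (hWq : μ[W|m] =ᵐ[μ] q)
    (h₁ : μ[W * Z|m] =ᵐ[μ] μ[W|m] * μ[Z|m])
    (h₂ : μ[W * Z ^ 2|m] =ᵐ[μ] μ[W|m] * μ[Z ^ 2|m]) :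
    Integrable (q⁻¹ ^ 2 * (W * (Z - a) ^ 2)) μ ∧
      μ[q⁻¹ ^ 2 * (W * (Z - a) ^ 2)|m] =ᵐ[μ]
        (μ[Z ^ 2|m] - μ[Z|m] ^ 2 + (μ[Z|m] - a) ^ 2) / q := by
  have hW1' : ∀ᵐ ω ∂μ, ‖W ω‖ ≤ 1 := ae_of_all _ hW1
  have hZC' : ∀ᵐ ω ∂μ, ‖Z ω‖ ≤ C := ae_of_all _ hZC
  have hZint : Integrable Z μ := .of_bound hZ.aestronglyMeasurable C hZC'
  have hZ2int : Integrable (Z ^ 2) μ := by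
    rw [sq]
    exact hZint.bdd_mul hZ.aestronglyMeasurable hZC'
  have hq2 : StronglyMeasurable[m] (q⁻¹ ^ 2) :=
    (hq.measurable.inv.pow_const 2).stronglyMeasurable
  have hq2c : ∀ᵐ ω ∂μ, ‖(q⁻¹ ^ 2) ω‖ ≤ c⁻¹ ^ 2 := hqc.mono fun ω h => by
    have := hc.trans_le h
    simp only [Pi.pow_apply, Pi.inv_apply, norm_pow, norm_inv, Real.norm_eq_abs, abs_of_pos this]
    gcongr
  have hWZa := integrable_mul_sq_sub_of_abs_le hW hW1 hZ hZC (ha.mono hm).measurable haC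
  refine ⟨hWZa.bdd_mul (hq2.mono hm).aestronglyMeasurable hq2c, ?_⟩
  filter_upwards [condExp_stronglyMeasurable_mul_of_bound hm hq2 hWZa _ hq2c,
    condExp_mul_sq_sub_eq hm (.of_bound hW.aestronglyMeasurable 1 hW1')
      (hZint.bdd_mul hW.aestronglyMeasurable hW1') (hZ2int.bdd_mul hW.aestronglyMeasurable hW1')
      ha haC h₁ h₂, hWq, hqc] with ω e₁ e₂ e₃ hcq
  simp only [Pi.mul_apply, Pi.pow_apply, Pi.inv_apply, Pi.div_apply] at e₁ e₂ e₃ ⊢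
  rw [e₁, e₂, e₃]
  have := (hc.trans_le hcq).ne'
  field_simp

theorem condExp_sq_treatment_score (hm : m ≤ mΩ) [IsFiniteMeasure μ]
    {D A B π μ₁ μ₀ : Ω → ℝ} {c C : ℝ} (hc : 0 < c)
    (hD : Measurable D) (hD01 : ∀ ω, D ω = 0 ∨ D ω = 1)
    (hA : Measurable A) (hAC : ∀ ω, |A ω| ≤ C) (hB : Measurable B) (hBC : ∀ ω, |B ω| ≤ C)
    (hπ : StronglyMeasurable[m] π) (hDπ : μ[D|m] =ᵐ[μ] π)
    (hπc : ∀ᵐ ω ∂μ, c ≤ π ω ∧ π ω ≤ 1 - c)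
    (hμ₁ : StronglyMeasurable[m] μ₁) (hAμ₁ : μ₁ =ᵐ[μ] μ[A|m])
    (hμ₀ : StronglyMeasurable[m] μ₀) (hBμ₀ : μ₀ =ᵐ[μ] μ[B|m])
    (hDA : μ[D * A|m] =ᵐ[μ] μ[D|m] * μ[A|m])
    (hDA2 : μ[D * A ^ 2|m] =ᵐ[μ] μ[D|m] * μ[A ^ 2|m])
    (hDB : μ[(1 - D) * B|m] =ᵐ[μ] μ[1 - D|m] * μ[B|m])
    (hDB2 : μ[(1 - D) * B ^ 2|m] =ᵐ[μ] μ[1 - D|m] * μ[B ^ 2|m]) :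
    μ[fun ω => (D ω / π ω * A ω - (1 - D ω) / (1 - π ω) * B ω
        - (μ₁ ω / π ω + μ₀ ω / (1 - π ω)) * (D ω - π ω)) ^ 2|m] =ᵐ[μ]
      fun ω => (μ₁ ω - μ₀ ω) ^ 2 + (μ[A ^ 2|m] ω - μ₁ ω ^ 2) / π ω
        + (μ[B ^ 2|m] ω - μ₀ ω ^ 2) / (1 - π ω) := by
  have bound_of_version {Z ν : Ω → ℝ} (hZC : ∀ ω, |Z ω| ≤ C) (hν : ν =ᵐ[μ] μ[Z|m]) :
      ∀ᵐ ω ∂μ, |ν ω| ≤ C := by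
    filter_upwards [hν, ae_bdd_abs_condExp_of_ae_bdd_abs (m := m) (ae_of_all _ hZC)] with ω h₁ h₂
    rwa [h₁]
  set a : Ω → ℝ := μ₁ * (1 - π) + μ₀ * π
  have ha : StronglyMeasurable[m] a :=
    (hμ₁.mul (stronglyMeasurable_one.sub hπ)).add (hμ₀.mul hπ)
  have haC : ∀ᵐ ω ∂μ, |a ω| ≤ C := by
    filter_upwards [bound_of_version hAC hAμ₁, bound_of_version hBC hBμ₀, hπc]
      with ω h₁ h₀ ⟨hcπ, hπc⟩
    exact abs_mul_one_sub_add_mul_le h₁ h₀ (by linarith) (by linarith)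
  have hD1 : ∀ ω, |D ω| ≤ 1 := fun ω => by rcases hD01 ω with h | h <;> simp [h]
  have hD1' : ∀ ω, |(1 - D) ω| ≤ 1 := fun ω => by rcases hD01 ω with h | h <;> simp [h]
  have hDint : Integrable D μ := .of_bound hD.aestronglyMeasurable 1
    (ae_of_all _ fun ω => (Real.norm_eq_abs _).trans_le (hD1 ω))
  have h1D : μ[1 - D|m] =ᵐ[μ] 1 - π :=
    (condExp_one_sub hm hDint).trans (Filter.EventuallyEq.rfl.sub hDπ)
  obtain ⟨hint₁, harm₁⟩ := condExp_inv_sq_mul_mul_sq_sub hm hc hD hD1 hA hAC ha haC hπ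
    (hπc.mono fun _ h => h.1) hDπ hDA hDA2
  obtain ⟨hint₀, harm₀⟩ := condExp_inv_sq_mul_mul_sq_sub hm hc (measurable_one.sub hD) hD1' hB
    hBC ha haC (stronglyMeasurable_one.sub hπ)
    (hπc.mono fun ω h => show c ≤ 1 - π ω by linarith [h.2])
    h1D hDB hDB2
  have hscore : (fun ω => (D ω / π ω * A ω - (1 - D ω) / (1 - π ω) * B ω
        - (μ₁ ω / π ω + μ₀ ω / (1 - π ω)) * (D ω - π ω)) ^ 2) =ᵐ[μ]
      π⁻¹ ^ 2 * (D * (A - a) ^ 2) + (1 - π)⁻¹ ^ 2 * ((1 - D) * (B - a) ^ 2) := by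
    filter_upwards [hπc] with ω ⟨hcπ, hπc⟩
    exact sq_treatment_score_eq (hD01 ω) (by linarith) (by linarith) rfl
  filter_upwards [condExp_congr_ae hscore, condExp_add hint₁ hint₀ m, harm₁, harm₀, hAμ₁, hBμ₀,
    hπc] with ω e₁ e₂ e₃ e₄ e₅ e₆ ⟨hcπ, hπc⟩
  simp only [Pi.add_apply, Pi.div_apply, Pi.sub_apply, Pi.pow_apply, Pi.one_apply] at e₂ e₃ e₄ ⊢
  rw [e₁, e₂, e₃, e₄, ← e₅, ← e₆]
  have : π ω ≠ 0 := by linarith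
  have : 1 - π ω ≠ 0 := by linarith
  simp only [a, Pi.add_apply, Pi.mul_apply, Pi.sub_apply, Pi.one_apply]
  field_simp
  ring

theorem condExp_sq_treatment_score_of_condIndepFun [StandardBorelSpace Ω] [IsFiniteMeasure μ]
    (hm : m ≤ mΩ) {γ : Type*} [MeasurableSpace γ] {Y : Ω → γ} {D A B π μ₁ μ₀ : Ω → ℝ}
    {S₁ S₀ : Set γ} {a₁ b₁ a₀ b₀ c : ℝ} (hc : 0 < c)
    (hY : Measurable Y) (hD : Measurable D) (hD01 : ∀ ω, D ω = 0 ∨ D ω = 1)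
    (hYD : CondIndepFun m hm Y D μ) (hS₁ : MeasurableSet S₁) (hS₀ : MeasurableSet S₀)
    (hA : A = fun ω => a₁ * (Y ⁻¹' S₁).indicator 1 ω + b₁)
    (hB : B = fun ω => a₀ * (Y ⁻¹' S₀).indicator 1 ω + b₀)
    (hπ : StronglyMeasurable[m] π) (hDπ : μ[D|m] =ᵐ[μ] π)
    (hπc : ∀ᵐ ω ∂μ, c ≤ π ω ∧ π ω ≤ 1 - c)
    (hμ₁ : StronglyMeasurable[m] μ₁) (hAμ₁ : μ₁ =ᵐ[μ] μ[A|m])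
    (hμ₀ : StronglyMeasurable[m] μ₀) (hBμ₀ : μ₀ =ᵐ[μ] μ[B|m]) :
    μ[fun ω => (D ω / π ω * A ω - (1 - D ω) / (1 - π ω) * B ω
        - (μ₁ ω / π ω + μ₀ ω / (1 - π ω)) * (D ω - π ω)) ^ 2|m] =ᵐ[μ]
      fun ω => (μ₁ ω - μ₀ ω) ^ 2 + (μ[A ^ 2|m] ω - μ₁ ω ^ 2) / π ω
        + (μ[B ^ 2|m] ω - μ₀ ω ^ 2) / (1 - π ω) := by
  have hD' : Measurable (1 - D) := measurable_one.sub hD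
  have hD01' : ∀ ω, (1 - D) ω = 0 ∨ (1 - D) ω = 1 := fun ω => by
    rcases hD01 ω with h | h <;> simp [h]
  have hYD' : CondIndepFun m hm Y (1 - D) μ :=
    hYD.comp measurable_id (measurable_const.sub measurable_id)
  subst hA hB
  refine condExp_sq_treatment_score hm hc hD hD01
    (C := |a₁| + |b₁| + (|a₀| + |b₀|))
    ((measurable_const.indicator (hY hS₁)).const_mul a₁ |>.add_const b₁)
    (fun ω => (abs_affine_indicator_le _ _ _ ω).trans (le_add_of_nonneg_right (by positivity)))
    ((measurable_const.indicator (hY hS₀)).const_mul a₀ |>.add_const b₀)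
    (fun ω => (abs_affine_indicator_le _ _ _ ω).trans (le_add_of_nonneg_left (by positivity)))
    hπ hDπ hπc hμ₁ hAμ₁ hμ₀ hBμ₀
    (hYD.condExp_mul_affine_indicator_preimage hY hD hD01 hS₁ _ _) ?_
    (hYD'.condExp_mul_affine_indicator_preimage hY hD' hD01' hS₀ _ _) ?_ <;>
  rw [sq_affine_indicator]
  · exact hYD.condExp_mul_affine_indicator_preimage hY hD hD01 hS₁ _ _
  · exact hYD'.condExp_mul_affine_indicator_preimage hY hD' hD01' hS₀ _ _

end CondExp

theorem ncqte_asymptotic_variance_general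
    {Ω : Type*} [mΩ : MeasurableSpace Ω] [StandardBorelSpace Ω]
    (μ : Measure Ω) [IsProbabilityMeasure μ]
    {k l : ℕ} (hlk : l < k)
    (D : Ω → ℝ) (Y0 Y1 : Ω → ℝ) (X : Ω → Fin k → ℝ)
    (hD : Measurable D) (hY0 : Measurable Y0) (hY1 : Measurable Y1) (hX : Measurable X)
    (hD01 : ∀ ω, D ω = 0 ∨ D ω = 1)
    (X₁ : Ω → Fin l → ℝ)
    (hX₁ : ∀ ω i, X₁ ω i = X ω (Fin.castLE hlk.le i))
    -- p(X) is a version of E[D | σ(X)]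
    (p : (Fin k → ℝ) → ℝ) (hp : Measurable p)
    (hpX : (fun ω => p (X ω)) =ᵐ[μ] μ[D | MeasurableSpace.comap X inferInstance])
    -- overlap
    (c : ℝ) (hc : 0 < c)
    (hoverlap : ∀ᵐ ω ∂μ, c ≤ p (X ω) ∧ p (X ω) ≤ 1 - c)
    -- unconfoundedness: (Y(0),Y(1)) ⟂ D | σ(X)
    (hunconf : CondIndepFun (MeasurableSpace.comap X inferInstance) hX.comap_le
      (fun ω => (Y0 ω, Y1 ω)) D μ)
    (τ : ℝ)
    (q0 q1 : ℝ) (f0 f1 : ℝ)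
    -- η_j(y) = (1{y ≤ q_j} − τ)/f_j
    (η0 η1 : ℝ → ℝ)
    (hη0 : ∀ y, η0 y = ((if y ≤ q0 then (1 : ℝ) else 0) - τ) / f0)
    (hη1 : ∀ y, η1 y = ((if y ≤ q1 then (1 : ℝ) else 0) - τ) / f1)
    -- ψ = (D/p(X))·η₁(Y(1)) − ((1−D)/(1−p(X)))·η₀(Y(0))
    (ψ : Ω → ℝ)
    (hψ : ∀ ω, ψ ω = (D ω / p (X ω)) * η1 (Y1 ω)
      - ((1 - D ω) / (1 - p (X ω))) * η0 (Y0 ω))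
    -- m_j(X) is a version of E[η_j(Y(j)) | σ(X)]
    (m0 m1 : (Fin k → ℝ) → ℝ) (hm0meas : Measurable m0) (hm1meas : Measurable m1)
    (hm0 : (fun ω => m0 (X ω)) =ᵐ[μ]
      μ[(fun ω => η0 (Y0 ω)) | MeasurableSpace.comap X inferInstance])
    (hm1 : (fun ω => m1 (X ω)) =ᵐ[μ]
      μ[(fun ω => η1 (Y1 ω)) | MeasurableSpace.comap X inferInstance])
    -- n_p(X) = m₁(X)/p(X) + m₀(X)/(1−p(X))
    (np : (Fin k → ℝ) → ℝ)
    (hnp : ∀ x, np x = m1 x / p x + m0 x / (1 - p x))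
    -- ε = D − p(X)
    (ε : Ω → ℝ) (hε : ∀ ω, ε ω = D ω - p (X ω))
    -- φ₂ = ψ − n_p(X)·ε
    (φ₂ : Ω → ℝ) (hφ₂ : ∀ ω, φ₂ ω = ψ ω - np (X ω) * ε ω) :
    μ[(fun ω => (φ₂ ω) ^ 2) | MeasurableSpace.comap X₁ inferInstance]
      =ᵐ[μ]
    μ[(fun ω =>
        (m1 (X ω) - m0 (X ω)) ^ 2
      + (condExp (MeasurableSpace.comap X inferInstance) μ
            (fun ω' => (η1 (Y1 ω')) ^ 2) ω - (m1 (X ω)) ^ 2) / p (X ω)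
      + (condExp (MeasurableSpace.comap X inferInstance) μ
            (fun ω' => (η0 (Y0 ω')) ^ 2) ω - (m0 (X ω)) ^ 2) / (1 - p (X ω))) |
      MeasurableSpace.comap X₁ inferInstance] := by
  have hXm : Measurable[MeasurableSpace.comap X inferInstance] X := comap_measurable X
  have hX₁m : Measurable[MeasurableSpace.comap X inferInstance] X₁ := by
    have : X₁ = (fun x i => x (Fin.castLE hlk.le i)) ∘ X := funext fun ω => funext (hX₁ ω)
    rw [this]
    exact (measurable_pi_lambda _ fun i => measurable_pi_apply _).comp hXm
  have hφ₂ : (fun ω => φ₂ ω ^ 2) = fun ω => (D ω / p (X ω) * η1 (Y1 ω)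
      - (1 - D ω) / (1 - p (X ω)) * η0 (Y0 ω)
      - (m1 (X ω) / p (X ω) + m0 (X ω) / (1 - p (X ω))) * (D ω - p (X ω))) ^ 2 := by
    ext ω
    rw [hφ₂, hψ, hε, hnp]
  refine (condExp_condExp_of_le hX₁m.comap_le hX.comap_le).symm.trans (condExp_congr_ae ?_)
  rw [hφ₂]
  refine condExp_sq_treatment_score_of_condIndepFun hX.comap_le hc (hY0.prodMk hY1) hD hD01
    hunconf (S₁ := Set.univ ×ˢ Set.Iic q1) (S₀ := Set.Iic q0 ×ˢ Set.univ)
    (MeasurableSet.univ.prod measurableSet_Iic) (measurableSet_Iic.prod .univ)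
    (a₁ := f1⁻¹) (b₁ := -(τ / f1)) (a₀ := f0⁻¹) (b₀ := -(τ / f0)) ?_ ?_
    (hp.comp hXm).stronglyMeasurable hpX.symm hoverlap
    (hm1meas.comp hXm).stronglyMeasurable hm1 (hm0meas.comp hXm).stronglyMeasurable hm0
  · ext ω
    by_cases h : Y1 ω ≤ q1 <;> simp [hη1, h] <;> ring
  · ext ω
    by_cases h : Y0 ω ≤ q0 <;> simp [hη0, h] <;> ring

/-- **Corollary 2.1, part (1): NCQTE asymptotic variance.** Almost surely
`E[φ₂² | σ(X₁)] = E[ (m₁(X) − m₀(X))² + σ²_{τ,1}(X)/p(X) + σ²_{τ,0}(X)/(1−p(X)) | σ(X₁) ]`,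
where `σ²_{τ,j}(X) = E[η_j(Y(j))² | σ(X)] − m_j(X)²`. -/
theorem ncqte_asymptotic_variance
    {Ω : Type*} [mΩ : MeasurableSpace Ω] [StandardBorelSpace Ω] [Nonempty Ω]
    (μ : Measure Ω) [IsProbabilityMeasure μ]
    {k l : ℕ} (hk : 2 ≤ k) (hl : 1 ≤ l) (hlk : l < k)
    (D : Ω → ℝ) (Y0 Y1 : Ω → ℝ) (X : Ω → Fin k → ℝ)
    (hD : Measurable D) (hY0 : Measurable Y0) (hY1 : Measurable Y1) (hX : Measurable X)
    (hD01 : ∀ ω, D ω = 0 ∨ D ω = 1)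
    (hY0int : Integrable Y0 μ) (hY1int : Integrable Y1 μ)
    (X₁ : Ω → Fin l → ℝ)
    (hX₁ : ∀ ω i, X₁ ω i = X ω (Fin.castLE hlk.le i))
    -- p(X) is a version of E[D | σ(X)]
    (p : (Fin k → ℝ) → ℝ) (hp : Measurable p)
    (hpX : (fun ω => p (X ω)) =ᵐ[μ] μ[D | MeasurableSpace.comap X inferInstance])
    -- overlap
    (c : ℝ) (hc : 0 < c)
    (hoverlap : ∀ᵐ ω ∂μ, c ≤ p (X ω) ∧ p (X ω) ≤ 1 - c)
    -- unconfoundedness: (Y(0),Y(1)) ⟂ D | σ(X)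
    (hunconf : CondIndepFun (MeasurableSpace.comap X inferInstance) hX.comap_le
      (fun ω => (Y0 ω, Y1 ω)) D μ)
    (τ : ℝ) (hτ : τ ∈ Set.Ioo (0 : ℝ) 1)
    (q0 q1 : ℝ) (f0 f1 : ℝ) (hf0 : 0 < f0) (hf1 : 0 < f1)
    -- η_j(y) = (1{y ≤ q_j} − τ)/f_j
    (η0 η1 : ℝ → ℝ)
    (hη0 : ∀ y, η0 y = ((if y ≤ q0 then (1 : ℝ) else 0) - τ) / f0)
    (hη1 : ∀ y, η1 y = ((if y ≤ q1 then (1 : ℝ) else 0) - τ) / f1)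
    -- ψ = (D/p(X))·η₁(Y(1)) − ((1−D)/(1−p(X)))·η₀(Y(0))
    (ψ : Ω → ℝ)
    (hψ : ∀ ω, ψ ω = (D ω / p (X ω)) * η1 (Y1 ω)
      - ((1 - D ω) / (1 - p (X ω))) * η0 (Y0 ω))
    -- m_j(X) is a version of E[η_j(Y(j)) | σ(X)]
    (m0 m1 : (Fin k → ℝ) → ℝ) (hm0meas : Measurable m0) (hm1meas : Measurable m1)
    (hm0 : (fun ω => m0 (X ω)) =ᵐ[μ]
      μ[(fun ω => η0 (Y0 ω)) | MeasurableSpace.comap X inferInstance])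
    (hm1 : (fun ω => m1 (X ω)) =ᵐ[μ]
      μ[(fun ω => η1 (Y1 ω)) | MeasurableSpace.comap X inferInstance])
    -- n_p(X) = m₁(X)/p(X) + m₀(X)/(1−p(X))
    (np : (Fin k → ℝ) → ℝ)
    (hnp : ∀ x, np x = m1 x / p x + m0 x / (1 - p x))
    -- ε = D − p(X)
    (ε : Ω → ℝ) (hε : ∀ ω, ε ω = D ω - p (X ω))
    -- φ₂ = ψ − n_p(X)·ε
    (φ₂ : Ω → ℝ) (hφ₂ : ∀ ω, φ₂ ω = ψ ω - np (X ω) * ε ω) :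
    μ[(fun ω => (φ₂ ω) ^ 2) | MeasurableSpace.comap X₁ inferInstance]
      =ᵐ[μ]
    μ[(fun ω =>
        (m1 (X ω) - m0 (X ω)) ^ 2
      + (condExp (MeasurableSpace.comap X inferInstance) μ
            (fun ω' => (η1 (Y1 ω')) ^ 2) ω - (m1 (X ω)) ^ 2) / p (X ω)
      + (condExp (MeasurableSpace.comap X inferInstance) μ
            (fun ω' => (η0 (Y0 ω')) ^ 2) ω - (m0 (X ω)) ^ 2) / (1 - p (X ω))) |
      MeasurableSpace.comap X₁ inferInstance] :=
  ncqte_asymptotic_variance_general (mΩ := mΩ) μ hlk D Y0 Y1 X hD hY0 hY1 hX hD01 X₁ hX₁ p hp hpX c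
    hc hoverlap hunconf τ q0 q1 f0 f1 η0 η1 hη0 hη1 ψ hψ m0 m1 hm0meas hm1meas hm0 hm1 np hnp ε hε
    φ₂ hφ₂
end

section
/- (Corollary 2.4: SCQTE versus NCQTE variance comparison). Suppose additionally D is conditionally independent of X given σ(αᵀX) and p(X) agrees a.s. with a σ(αᵀX)-measurable function. Then almost surely E[φ₃*² | σ(X₁)] = E[φ₂² | σ(X₁)] + E[ p(X)(1−p(X)) · ( (m₁(X) − m₁ᵅ)/p(X) + (m₀(X) − m₀ᵅ)/(1−p(X)) )² | σ(X₁) ]; in particular σ²_{scqte}* ≥ σ²_{ncqte}*. -/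
/-!
The two influence functions differ by a `σ(X)`-measurable multiple of `ε = D - p(X)`:
`φ₃* = φ₂ + Δ ε` with `Δ = n_p(X) - e_p = (m₁(X) - m₁ᵅ)/p(X) + (m₀(X) - m₀ᵅ)/(1 - p(X))`.
Unconfoundedness gives `E[D η_j(Y(j)) | X] = p(X) m_j(X)`, hence
`E[ψ ε | X] = n_p(X) p(X)(1 - p(X))`; since `D` is binary, `E[ε² | X] = p(X)(1 - p(X))`, so `φ₂`
is conditionally orthogonal to `ε`. Expanding the square,
`E[φ₃*² | X] = E[φ₂² | X] + p(X)(1 - p(X)) Δ²`, and the tower property carries this to `σ(X₁)`.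
-/

open MeasureTheory ProbabilityTheory
open scoped ENNReal

section General

variable {Ω : Type*} {m₁ m mΩ : MeasurableSpace Ω} {μ : Measure Ω}

lemma MeasureTheory.MemLp.div_of_le {f g : Ω → ℝ} {c : ℝ} (hf : MemLp f ∞ μ)
    (hg : AEStronglyMeasurable g μ) (hc : 0 < c) (hcg : ∀ᵐ ω ∂μ, c ≤ g ω) :
    MemLp (f / g) ∞ μ := by
  have hinv : MemLp g⁻¹ ∞ μ := by
    refine memLp_top_of_bound hg.aemeasurable.inv.aestronglyMeasurable c⁻¹ ?_
    filter_upwards [hcg] with ω h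
    rw [Pi.inv_apply, norm_inv, Real.norm_of_nonneg (hc.le.trans h)]
    exact inv_anti₀ hc h
  rw [div_eq_mul_inv]
  exact hinv.mul' hf

lemma memLp_top_comp_of_eq_indicator {β : Type*} [MeasurableSpace β] {Y : Ω → β}
    (hY : Measurable Y) {h : β → ℝ} {s : Set β} (hs : MeasurableSet s) {a b : ℝ}
    (hh : ∀ y, h y = a * s.indicator 1 y + b) : MemLp (fun ω => h (Y ω)) ∞ μ := by
  refine memLp_top_of_bound ?_ (|a| + |b|) (ae_of_all _ fun ω => ?_)
  · simp_rw [hh]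
    exact ((measurable_const.mul ((measurable_const.indicator hs).comp hY)).add_const
      b).aestronglyMeasurable
  · rw [hh, Real.norm_eq_abs]
    refine (abs_add_le _ _).trans (add_le_add_left ?_ _)
    rw [abs_mul]
    by_cases hy : Y ω ∈ s <;> simp [hy]

lemma ite_sub_div_eq_indicator (q τ f y : ℝ) :
    ((if y ≤ q then (1 : ℝ) else 0) - τ) / f = f⁻¹ * (Set.Iic q).indicator 1 y + -(τ / f) := by
  by_cases hy : y ≤ q <;> simp [hy] <;> ring

lemma ae_le_of_ae_eq_add_condExp {F G H : Ω → ℝ} (hFGH : F =ᵐ[μ] G + μ[H | m₁])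
    (hH : 0 ≤ᵐ[μ] H) : ∀ᵐ ω ∂μ, G ω ≤ F ω := by
  filter_upwards [hFGH, condExp_nonneg (m := m₁) hH] with ω h₁ h₂
  rw [h₁, Pi.add_apply]
  exact le_add_of_nonneg_right h₂

variable [IsFiniteMeasure μ]

lemma condExp_eq_add_condExp_of_le (hm₁ : m₁ ≤ m) (hm : m ≤ mΩ) {f g h : Ω → ℝ}
    (hh : Integrable h μ) (hfgh : μ[f | m] =ᵐ[μ] μ[g | m] + h) :
    μ[f | m₁] =ᵐ[μ] μ[g | m₁] + μ[h | m₁] :=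
  calc μ[f | m₁] =ᵐ[μ] μ[μ[f | m] | m₁] := (condExp_condExp_of_le hm₁ hm).symm
    _ =ᵐ[μ] μ[μ[g | m] + h | m₁] := condExp_congr_ae hfgh
    _ =ᵐ[μ] μ[μ[g | m] | m₁] + μ[h | m₁] := condExp_add integrable_condExp hh m₁
    _ =ᵐ[μ] μ[g | m₁] + μ[h | m₁] := (condExp_condExp_of_le hm₁ hm).add (by rfl)

lemma condExp_sq_add_mul_of_condExp_mul_eq_zero {φ ε Δ : Ω → ℝ} (hφ : MemLp φ ∞ μ)
    (hε : MemLp ε ∞ μ) (hΔm : StronglyMeasurable[m] Δ) (hΔ : MemLp Δ ∞ μ)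
    (horth : μ[φ * ε | m] =ᵐ[μ] 0) :
    μ[(φ + Δ * ε) ^ 2 | m] =ᵐ[μ] μ[φ ^ 2 | m] + Δ ^ 2 * μ[ε ^ 2 | m] := by
  have hφ2 : MemLp (φ ^ 2) ∞ μ := by rw [sq]; exact hφ.mul hφ
  have hε2 : MemLp (ε ^ 2) ∞ μ := by rw [sq]; exact hε.mul hε
  have hΔ2 : MemLp (Δ ^ 2) ∞ μ := by rw [sq]; exact hΔ.mul hΔ
  have hφε : MemLp (φ * ε) ∞ μ := hε.mul hφ
  have hcross : Integrable (Δ * (φ * ε)) μ := (hφε.mul hΔ).integrable le_top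
  have hsq : Integrable (Δ ^ 2 * ε ^ 2) μ := (hε2.mul hΔ2).integrable le_top
  rw [show (φ + Δ * ε) ^ 2 = φ ^ 2 + Δ * (φ * ε) + Δ * (φ * ε) + Δ ^ 2 * ε ^ 2 by ring]
  filter_upwards [condExp_add (((hφ2.integrable le_top).add hcross).add hcross) hsq m,
    condExp_add ((hφ2.integrable le_top).add hcross) hcross m,
    condExp_add (hφ2.integrable le_top) hcross m,
    condExp_mul_of_stronglyMeasurable_left hΔm hcross (hφε.integrable le_top),
    condExp_mul_of_stronglyMeasurable_left (hΔm.pow 2) hsq (hε2.integrable le_top), horth]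
    with ω h₁ h₂ h₃ h₄ h₅ h₆
  simp_all

/-- For `h` affine in an indicator, the product rule is the defining property of conditional
independence on the sets `Y ⁻¹' s` and `D ⁻¹' {1}`. -/
lemma condExp_mul_comp_of_condIndepFun [StandardBorelSpace Ω] {β : Type*} [MeasurableSpace β]
    {Y : Ω → β} {D : Ω → ℝ} (hm : m ≤ mΩ) (hY : Measurable Y) (hDm : Measurable D)
    (hD : ∀ ω, D ω = 0 ∨ D ω = 1) (hYD : CondIndepFun m hm Y D μ) {h : β → ℝ} {s : Set β}
    (hs : MeasurableSet s) {a b : ℝ} (hh : ∀ y, h y = a * s.indicator 1 y + b) :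
    μ[D * (fun ω => h (Y ω)) | m] =ᵐ[μ] μ[D | m] * μ[fun ω => h (Y ω) | m] := by
  set A := Y ⁻¹' s
  set B := D ⁻¹' {1}
  have hDB : D = B.indicator fun _ => 1 := by
    ext ω; rcases hD ω with h | h <;> simp [B, h]
  have hDY : D * (fun ω => h (Y ω)) = a • (A ∩ B).indicator (fun _ => 1) + b • D := by
    ext ω
    by_cases hY : Y ω ∈ s <;> rcases hD ω with hω | hω <;> simp [A, B, hω, hh, hY]
  have hhY : (fun ω => h (Y ω)) = a • A.indicator (fun _ => 1) + fun _ => b := by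
    ext ω
    by_cases hY : Y ω ∈ s <;> simp [A, hh, hY]
  have hA : Integrable (A.indicator fun _ => (1 : ℝ)) μ :=
    (integrable_const 1).indicator (hY hs)
  have hAB : Integrable ((A ∩ B).indicator fun _ => (1 : ℝ)) μ :=
    (integrable_const 1).indicator ((hY hs).inter (hDm (measurableSet_singleton 1)))
  have hDi : Integrable D μ := by
    rw [hDB]; exact (integrable_const 1).indicator (hDm (measurableSet_singleton 1))
  have hind := (condIndepFun_iff_condExp_inter_preimage_eq_mul hY hDm).mp hYD s {1} hs
    (measurableSet_singleton 1)
  rw [← hDB] at hind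
  rw [hDY, hhY]
  filter_upwards [condExp_add (hAB.smul a) (hDi.smul b) m,
    condExp_smul a ((A ∩ B).indicator fun _ => (1 : ℝ)) m, condExp_smul b D m, hind,
    condExp_add (hA.smul a) (integrable_const b) m,
    condExp_smul a (A.indicator fun _ => (1 : ℝ)) m] with ω h₁ h₂ h₃ h₄ h₅ h₆
  simp only [Pi.add_apply, Pi.mul_apply, Pi.smul_apply, smul_eq_mul] at *
  rw [h₁, h₂, h₃, h₄, h₅, h₆, condExp_const hm]
  ring

end General

section InversePropensityWeighting

variable {Ω : Type*} {m : MeasurableSpace Ω}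

/-- The paper's `n_p(X)` and `e_p` are `ipwSum p m₁ m₀` and `ipwSum p m₁ᵅ m₀ᵅ`; its `ψ` is
`ipwScore D p η₁(Y(1)) η₀(Y(0))`. -/
noncomputable def ipwSum (P a b : Ω → ℝ) : Ω → ℝ := fun ω => a ω / P ω + b ω / (1 - P ω)

noncomputable def ipwScore (D P h₁ h₀ : Ω → ℝ) : Ω → ℝ :=
  fun ω => D ω / P ω * h₁ ω - (1 - D ω) / (1 - P ω) * h₀ ω

lemma ipwScore_eq_ipwSum (D P h₁ h₀ : Ω → ℝ) :
    ipwScore D P h₁ h₀ = ipwSum P (D * h₁) (-((1 - D) * h₀)) := by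
  ext ω
  simp only [ipwScore, ipwSum, Pi.mul_apply, Pi.neg_apply, Pi.sub_apply, Pi.one_apply]
  ring

lemma ipwSum_sub (P a b a' b' : Ω → ℝ) :
    ipwSum P a b - ipwSum P a' b' = ipwSum P (a - a') (b - b') := by
  ext ω; simp only [ipwSum, Pi.sub_apply]; ring

lemma MeasureTheory.StronglyMeasurable.ipwSum {P a b : Ω → ℝ} (hP : StronglyMeasurable[m] P)
    (ha : StronglyMeasurable[m] a) (hb : StronglyMeasurable[m] b) :
    StronglyMeasurable[m] (ipwSum P a b) :=
  ((ha.measurable.div hP.measurable).add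
    (hb.measurable.div (measurable_const.sub hP.measurable))).stronglyMeasurable

end InversePropensityWeighting

structure IsPropensityScore {Ω : Type*} (m : MeasurableSpace Ω) {mΩ : MeasurableSpace Ω}
    (μ : Measure Ω) (D P : Ω → ℝ) (c : ℝ) : Prop where
  le : m ≤ mΩ
  binary : ∀ ω, D ω = 0 ∨ D ω = 1
  measurable : Measurable D
  stronglyMeasurable : StronglyMeasurable[m] P
  ae_eq_condExp : P =ᵐ[μ] μ[D | m]
  pos : 0 < c
  overlap : ∀ᵐ ω ∂μ, c ≤ P ω ∧ P ω ≤ 1 - c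

namespace IsPropensityScore

variable {Ω : Type*} {m₁ m mΩ : MeasurableSpace Ω} {μ : Measure Ω} {D P : Ω → ℝ} {c : ℝ}

lemma memLp_treatment (hP : IsPropensityScore m μ D P c) : MemLp D ∞ μ :=
  memLp_top_of_bound hP.measurable.aestronglyMeasurable 1 <| ae_of_all _ fun ω => by
    rcases hP.binary ω with h | h <;> simp [h]

lemma memLp (hP : IsPropensityScore m μ D P c) : MemLp P ∞ μ := by
  refine memLp_top_of_bound (hP.stronglyMeasurable.mono hP.le).aestronglyMeasurable 1 ?_
  filter_upwards [hP.overlap] with ω ⟨h₁, h₂⟩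
  rw [Real.norm_eq_abs, abs_le]
  constructor <;> linarith [hP.pos]

lemma aestronglyMeasurable (hP : IsPropensityScore m μ D P c) : AEStronglyMeasurable P μ :=
  (hP.stronglyMeasurable.mono hP.le).aestronglyMeasurable

lemma memLp_div (hP : IsPropensityScore m μ D P c) {f : Ω → ℝ} (hf : MemLp f ∞ μ) :
    MemLp (f / P) ∞ μ :=
  hf.div_of_le hP.aestronglyMeasurable hP.pos (hP.overlap.mono fun _ h => h.1)

lemma memLp_div_one_sub (hP : IsPropensityScore m μ D P c) {f : Ω → ℝ} (hf : MemLp f ∞ μ) :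
    MemLp (f / (1 - P)) ∞ μ :=
  hf.div_of_le (aestronglyMeasurable_const.sub hP.aestronglyMeasurable) hP.pos
    (hP.overlap.mono fun _ h => by simp only [Pi.sub_apply, Pi.one_apply]; linarith [h.2])

lemma memLp_ipwSum (hP : IsPropensityScore m μ D P c) {a b : Ω → ℝ} (ha : MemLp a ∞ μ)
    (hb : MemLp b ∞ μ) : MemLp (ipwSum P a b) ∞ μ :=
  (hP.memLp_div ha).add (hP.memLp_div_one_sub hb)

lemma ae_ne_zero (hP : IsPropensityScore m μ D P c) : ∀ᵐ ω ∂μ, P ω ≠ 0 ∧ 1 - P ω ≠ 0 :=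
  hP.overlap.mono fun _ h => ⟨by linarith [hP.pos, h.1], by linarith [hP.pos, h.2]⟩

lemma ae_nonneg_mul_one_sub_mul_sq (hP : IsPropensityScore m μ D P c) (f : Ω → ℝ) :
    0 ≤ᵐ[μ] P * (1 - P) * f ^ 2 := by
  filter_upwards [hP.overlap] with ω ⟨h₁, h₂⟩
  simp only [Pi.mul_apply, Pi.sub_apply, Pi.one_apply, Pi.pow_apply, Pi.zero_apply]
  have := hP.pos
  exact mul_nonneg (mul_nonneg (by linarith) (by linarith)) (sq_nonneg _)

variable [IsFiniteMeasure μ] {h₁ h₀ M₁ M₀ N₁ N₀ : Ω → ℝ}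

lemma condExp_sub_eq_zero (hP : IsPropensityScore m μ D P c) : μ[D - P | m] =ᵐ[μ] 0 := by
  filter_upwards [condExp_sub (hP.memLp_treatment.integrable le_top)
    (hP.memLp.integrable le_top) m, hP.ae_eq_condExp] with ω h₁ h₂
  rw [h₁, Pi.sub_apply, condExp_of_stronglyMeasurable hP.le hP.stronglyMeasurable
    (hP.memLp.integrable le_top), h₂, sub_self, Pi.zero_apply]

lemma condExp_sub_sq (hP : IsPropensityScore m μ D P c) :
    μ[(D - P) ^ 2 | m] =ᵐ[μ] P * (1 - P) := by
  have hsq : (D - P) ^ 2 = (1 - 2 * P) * (D - P) + P * (1 - P) := by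
    ext ω
    rcases hP.binary ω with h | h <;> simp [h] <;> ring
  have hcoef : StronglyMeasurable[m] (1 - 2 * P) :=
    stronglyMeasurable_const.sub (stronglyMeasurable_const.mul hP.stronglyMeasurable)
  have hvar : StronglyMeasurable[m] (P * (1 - P)) :=
    hP.stronglyMeasurable.mul (stronglyMeasurable_const.sub hP.stronglyMeasurable)
  have hres : MemLp (D - P) ∞ μ := hP.memLp_treatment.sub hP.memLp
  have hcoefL : MemLp (1 - 2 * P) ∞ μ := (memLp_const 1).sub (hP.memLp.const_mul 2)
  have hvarL : MemLp (P * (1 - P)) ∞ μ := ((memLp_const 1).sub hP.memLp).mul hP.memLp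
  rw [hsq]
  filter_upwards [condExp_add ((hres.mul hcoefL).integrable le_top) (hvarL.integrable le_top) m,
    condExp_mul_of_stronglyMeasurable_left hcoef ((hres.mul hcoefL).integrable le_top)
      (hres.integrable le_top), hP.condExp_sub_eq_zero] with ω h₁ h₂ h₃
  rw [h₁, Pi.add_apply, h₂, condExp_of_stronglyMeasurable hP.le hvar (hvarL.integrable le_top)]
  simp [h₃]

lemma memLp_ipwScore (hP : IsPropensityScore m μ D P c) (hh₁ : MemLp h₁ ∞ μ)
    (hh₀ : MemLp h₀ ∞ μ) : MemLp (ipwScore D P h₁ h₀) ∞ μ := by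
  rw [ipwScore_eq_ipwSum]
  exact hP.memLp_ipwSum (hh₁.mul hP.memLp_treatment)
    (hh₀.mul ((memLp_const 1).sub hP.memLp_treatment)).neg

lemma condExp_ipwScore_mul_sub (hP : IsPropensityScore m μ D P c) (hh₁ : MemLp h₁ ∞ μ)
    (hh₀ : MemLp h₀ ∞ μ) (hDh₁ : μ[D * h₁ | m] =ᵐ[μ] μ[D | m] * μ[h₁ | m])
    (hDh₀ : μ[D * h₀ | m] =ᵐ[μ] μ[D | m] * μ[h₀ | m]) (hM₁ : μ[h₁ | m] =ᵐ[μ] M₁)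
    (hM₀ : μ[h₀ | m] =ᵐ[μ] M₀) :
    μ[ipwScore D P h₁ h₀ * (D - P) | m] =ᵐ[μ] (1 - P) * M₁ + P * M₀ := by
  have hdec : ipwScore D P h₁ h₀ * (D - P)
      = ((1 - P) / P) * (D * h₁) + (P / (1 - P)) * (h₀ - D * h₀) := by
    ext ω
    rcases hP.binary ω with h | h <;>
      simp only [ipwScore, h, Pi.mul_apply, Pi.add_apply, Pi.sub_apply, Pi.div_apply,
        Pi.one_apply] <;> ring
  have hPm := hP.stronglyMeasurable
  have hc₁ : StronglyMeasurable[m] ((1 - P) / P) :=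
    ((measurable_const.sub hPm.measurable).div hPm.measurable).stronglyMeasurable
  have hc₀ : StronglyMeasurable[m] (P / (1 - P)) :=
    (hPm.measurable.div (measurable_const.sub hPm.measurable)).stronglyMeasurable
  have hc₁L : MemLp ((1 - P) / P) ∞ μ := hP.memLp_div ((memLp_const 1).sub hP.memLp)
  have hc₀L : MemLp (P / (1 - P)) ∞ μ := hP.memLp_div_one_sub hP.memLp
  have hDh₁L : MemLp (D * h₁) ∞ μ := hh₁.mul hP.memLp_treatment
  have hDh₀L : MemLp (h₀ - D * h₀) ∞ μ := hh₀.sub (hh₀.mul hP.memLp_treatment)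
  rw [hdec]
  filter_upwards [condExp_add ((hDh₁L.mul hc₁L).integrable le_top)
      ((hDh₀L.mul hc₀L).integrable le_top) m,
    condExp_mul_of_stronglyMeasurable_left hc₁ ((hDh₁L.mul hc₁L).integrable le_top)
      (hDh₁L.integrable le_top),
    condExp_mul_of_stronglyMeasurable_left hc₀ ((hDh₀L.mul hc₀L).integrable le_top)
      (hDh₀L.integrable le_top),
    condExp_sub (hh₀.integrable le_top) ((hh₀.mul hP.memLp_treatment).integrable le_top) m,
    hDh₁, hDh₀, hM₁, hM₀, hP.ae_eq_condExp, hP.ae_ne_zero]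
    with ω h₁ h₂ h₃ h₄ h₅ h₆ h₇ h₈ h₉ ⟨hP₀, hP₁⟩
  simp only [Pi.add_apply, Pi.mul_apply, Pi.sub_apply, Pi.div_apply, Pi.one_apply] at *
  rw [h₁, h₂, h₃, h₄, h₅, h₆, h₇, h₈, ← h₉]
  field_simp

lemma condExp_residual_mul_eq_zero (hP : IsPropensityScore m μ D P c) (hh₁ : MemLp h₁ ∞ μ)
    (hh₀ : MemLp h₀ ∞ μ) (hDh₁ : μ[D * h₁ | m] =ᵐ[μ] μ[D | m] * μ[h₁ | m])
    (hDh₀ : μ[D * h₀ | m] =ᵐ[μ] μ[D | m] * μ[h₀ | m]) (hM₁ : μ[h₁ | m] =ᵐ[μ] M₁)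
    (hM₀ : μ[h₀ | m] =ᵐ[μ] M₀) (hM₁m : StronglyMeasurable[m] M₁)
    (hM₀m : StronglyMeasurable[m] M₀) :
    μ[(ipwScore D P h₁ h₀ - ipwSum P M₁ M₀ * (D - P)) * (D - P) | m] =ᵐ[μ] 0 := by
  have hnm : StronglyMeasurable[m] (ipwSum P M₁ M₀) := hP.stronglyMeasurable.ipwSum hM₁m hM₀m
  have hn : MemLp (ipwSum P M₁ M₀) ∞ μ :=
    hP.memLp_ipwSum ((hh₁.condExp le_top).ae_eq hM₁) ((hh₀.condExp le_top).ae_eq hM₀)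
  have hε : MemLp (D - P) ∞ μ := hP.memLp_treatment.sub hP.memLp
  have hε2 : MemLp ((D - P) ^ 2) ∞ μ := by rw [sq]; exact hε.mul hε
  have hψε : Integrable (ipwScore D P h₁ h₀ * (D - P)) μ :=
    (hε.mul (hP.memLp_ipwScore hh₁ hh₀)).integrable le_top
  have hnε : Integrable (ipwSum P M₁ M₀ * (D - P) ^ 2) μ := (hε2.mul hn).integrable le_top
  rw [show (ipwScore D P h₁ h₀ - ipwSum P M₁ M₀ * (D - P)) * (D - P)
      = ipwScore D P h₁ h₀ * (D - P) - ipwSum P M₁ M₀ * (D - P) ^ 2 by ring]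
  filter_upwards [condExp_sub hψε hnε m,
    hP.condExp_ipwScore_mul_sub hh₁ hh₀ hDh₁ hDh₀ hM₁ hM₀,
    condExp_mul_of_stronglyMeasurable_left hnm hnε (hε2.integrable le_top),
    hP.condExp_sub_sq, hP.ae_ne_zero] with ω h₁ h₂ h₃ h₄ ⟨hP₀, hP₁⟩
  simp only [Pi.add_apply, Pi.mul_apply, Pi.sub_apply, Pi.one_apply, Pi.zero_apply] at *
  rw [h₁, h₂, h₃, h₄, ipwSum]
  field_simp
  ring

lemma condExp_sq_residual_eq_add (hP : IsPropensityScore m μ D P c) (hm₁ : m₁ ≤ m)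
    (hh₁ : MemLp h₁ ∞ μ) (hh₀ : MemLp h₀ ∞ μ)
    (hDh₁ : μ[D * h₁ | m] =ᵐ[μ] μ[D | m] * μ[h₁ | m])
    (hDh₀ : μ[D * h₀ | m] =ᵐ[μ] μ[D | m] * μ[h₀ | m]) (hM₁ : μ[h₁ | m] =ᵐ[μ] M₁)
    (hM₀ : μ[h₀ | m] =ᵐ[μ] M₀) (hM₁m : StronglyMeasurable[m] M₁)
    (hM₀m : StronglyMeasurable[m] M₀) (hN₁m : StronglyMeasurable[m] N₁)
    (hN₀m : StronglyMeasurable[m] N₀) (hN₁ : MemLp N₁ ∞ μ) (hN₀ : MemLp N₀ ∞ μ) :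
    μ[(ipwScore D P h₁ h₀ - ipwSum P N₁ N₀ * (D - P)) ^ 2 | m₁] =ᵐ[μ]
      μ[(ipwScore D P h₁ h₀ - ipwSum P M₁ M₀ * (D - P)) ^ 2 | m₁]
        + μ[P * (1 - P) * ipwSum P (M₁ - N₁) (M₀ - N₀) ^ 2 | m₁] := by
  have hM₁L : MemLp M₁ ∞ μ := (hh₁.condExp le_top).ae_eq hM₁
  have hM₀L : MemLp M₀ ∞ μ := (hh₀.condExp le_top).ae_eq hM₀
  have hΔm : StronglyMeasurable[m] (ipwSum P (M₁ - N₁) (M₀ - N₀)) :=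
    hP.stronglyMeasurable.ipwSum (hM₁m.sub hN₁m) (hM₀m.sub hN₀m)
  have hΔ : MemLp (ipwSum P (M₁ - N₁) (M₀ - N₀)) ∞ μ :=
    hP.memLp_ipwSum (hM₁L.sub hN₁) (hM₀L.sub hN₀)
  have hφ₂ : MemLp (ipwScore D P h₁ h₀ - ipwSum P M₁ M₀ * (D - P)) ∞ μ :=
    (hP.memLp_ipwScore hh₁ hh₀).sub
      ((hP.memLp_treatment.sub hP.memLp).mul (hP.memLp_ipwSum hM₁L hM₀L))
  have hG : MemLp (P * (1 - P) * ipwSum P (M₁ - N₁) (M₀ - N₀) ^ 2) ∞ μ := by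
    have hΔ2 : MemLp (ipwSum P (M₁ - N₁) (M₀ - N₀) ^ 2) ∞ μ := by rw [sq]; exact hΔ.mul hΔ
    have hvar : MemLp (P * (1 - P)) ∞ μ := ((memLp_const 1).sub hP.memLp).mul hP.memLp
    exact hΔ2.mul hvar
  have hsplit : ipwScore D P h₁ h₀ - ipwSum P N₁ N₀ * (D - P)
      = (ipwScore D P h₁ h₀ - ipwSum P M₁ M₀ * (D - P))
        + ipwSum P (M₁ - N₁) (M₀ - N₀) * (D - P) := by
    rw [← ipwSum_sub]; ring
  refine condExp_eq_add_condExp_of_le hm₁ hP.le (hG.integrable le_top) ?_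
  rw [hsplit]
  filter_upwards [condExp_sq_add_mul_of_condExp_mul_eq_zero hφ₂
      (hP.memLp_treatment.sub hP.memLp) hΔm hΔ
      (hP.condExp_residual_mul_eq_zero hh₁ hh₀ hDh₁ hDh₀ hM₁ hM₀ hM₁m hM₀m),
    hP.condExp_sub_sq] with ω h₁ h₂
  simp only [Pi.add_apply, Pi.mul_apply, Pi.pow_apply] at *
  rw [h₁, h₂]
  ring

end IsPropensityScore

theorem scqte_vs_ncqte_variance_comparison_general
    {Ω : Type*} [mΩ : MeasurableSpace Ω] [StandardBorelSpace Ω]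
    (μ : Measure Ω) [IsProbabilityMeasure μ]
    {k l q : ℕ} (hlk : l < k)
    (D : Ω → ℝ) (Y0 Y1 : Ω → ℝ) (X : Ω → Fin k → ℝ)
    (hD : Measurable D) (hY0 : Measurable Y0) (hY1 : Measurable Y1) (hX : Measurable X)
    (hD01 : ∀ ω, D ω = 0 ∨ D ω = 1)
    (X₁ : Ω → Fin l → ℝ)
    (hX₁ : ∀ ω i, X₁ ω i = X ω (Fin.castLE hlk.le i))
    -- p(X) is a version of E[D | σ(X)]
    (p : (Fin k → ℝ) → ℝ) (hp : Measurable p)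
    (hpX : (fun ω => p (X ω)) =ᵐ[μ] μ[D | MeasurableSpace.comap X inferInstance])
    -- overlap
    (c : ℝ) (hc : 0 < c)
    (hoverlap : ∀ᵐ ω ∂μ, c ≤ p (X ω) ∧ p (X ω) ≤ 1 - c)
    -- unconfoundedness: (Y(0),Y(1)) ⟂ D | σ(X)
    (hunconf : CondIndepFun (MeasurableSpace.comap X inferInstance) hX.comap_le
      (fun ω => (Y0 ω, Y1 ω)) D μ)
    -- the linear index αᵀX
    (α : Matrix (Fin k) (Fin q) ℝ)
    (τ : ℝ)
    (q0 q1 : ℝ) (f0 f1 : ℝ)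
    -- η_j(y) = (1{y ≤ q_j} − τ)/f_j
    (η0 η1 : ℝ → ℝ)
    (hη0 : ∀ y, η0 y = ((if y ≤ q0 then (1 : ℝ) else 0) - τ) / f0)
    (hη1 : ∀ y, η1 y = ((if y ≤ q1 then (1 : ℝ) else 0) - τ) / f1)
    -- ψ = (D/p(X))·η₁(Y(1)) − ((1−D)/(1−p(X)))·η₀(Y(0))
    (ψ : Ω → ℝ)
    (hψ : ∀ ω, ψ ω = (D ω / p (X ω)) * η1 (Y1 ω)
      - ((1 - D ω) / (1 - p (X ω))) * η0 (Y0 ω))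
    -- m_j(X) is a version of E[η_j(Y(j)) | σ(X)]
    (m0 m1 : (Fin k → ℝ) → ℝ) (hm0meas : Measurable m0) (hm1meas : Measurable m1)
    (hm0 : (fun ω => m0 (X ω)) =ᵐ[μ]
      μ[(fun ω => η0 (Y0 ω)) | MeasurableSpace.comap X inferInstance])
    (hm1 : (fun ω => m1 (X ω)) =ᵐ[μ]
      μ[(fun ω => η1 (Y1 ω)) | MeasurableSpace.comap X inferInstance])
    -- n_p(X) = m₁(X)/p(X) + m₀(X)/(1−p(X))
    (np : (Fin k → ℝ) → ℝ)
    (hnp : ∀ x, np x = m1 x / p x + m0 x / (1 - p x))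
    -- m_jᵅ is a version of E[η_j(Y(j)) | σ(αᵀX)]
    (mα0 mα1 : (Fin q → ℝ) → ℝ) (hmα0meas : Measurable mα0) (hmα1meas : Measurable mα1)
    (hmα0 : (fun ω => mα0 (α.transpose.mulVec (X ω))) =ᵐ[μ]
      μ[(fun ω => η0 (Y0 ω)) |
        MeasurableSpace.comap (fun ω => α.transpose.mulVec (X ω)) inferInstance])
    (hmα1 : (fun ω => mα1 (α.transpose.mulVec (X ω))) =ᵐ[μ]
      μ[(fun ω => η1 (Y1 ω)) |
        MeasurableSpace.comap (fun ω => α.transpose.mulVec (X ω)) inferInstance])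
    -- e_p = m₁ᵅ/p(X) + m₀ᵅ/(1−p(X))
    (ep : Ω → ℝ)
    (hep : ∀ ω, ep ω = mα1 (α.transpose.mulVec (X ω)) / p (X ω)
      + mα0 (α.transpose.mulVec (X ω)) / (1 - p (X ω)))
    -- ε = D − p(X)
    (ε : Ω → ℝ) (hε : ∀ ω, ε ω = D ω - p (X ω))
    -- φ₂ = ψ − n_p(X)·ε
    (φ₂ : Ω → ℝ) (hφ₂ : ∀ ω, φ₂ ω = ψ ω - np (X ω) * ε ω)
    -- φ₃* = ψ − e_p·ε
    (φ₃ : Ω → ℝ) (hφ₃ : ∀ ω, φ₃ ω = ψ ω - ep ω * ε ω) :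
    (μ[(fun ω => (φ₃ ω) ^ 2) | MeasurableSpace.comap X₁ inferInstance]
        =ᵐ[μ]
      μ[(fun ω => (φ₂ ω) ^ 2) | MeasurableSpace.comap X₁ inferInstance]
        + μ[(fun ω => p (X ω) * (1 - p (X ω))
            * ((m1 (X ω) - mα1 (α.transpose.mulVec (X ω))) / p (X ω)
              + (m0 (X ω) - mα0 (α.transpose.mulVec (X ω))) / (1 - p (X ω))) ^ 2) |
            MeasurableSpace.comap X₁ inferInstance])
      ∧
    (∀ᵐ ω ∂μ,
      (μ[(fun ω' => (φ₂ ω') ^ 2) | MeasurableSpace.comap X₁ inferInstance]) ω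
        ≤ (μ[(fun ω' => (φ₃ ω') ^ 2) | MeasurableSpace.comap X₁ inferInstance]) ω) := by
  obtain rfl : φ₃ = _ := funext hφ₃
  obtain rfl : φ₂ = _ := funext hφ₂
  obtain rfl : ψ = _ := funext hψ
  obtain rfl : ε = _ := funext hε
  obtain rfl : ep = _ := funext hep
  obtain rfl : np = _ := funext hnp
  have hXm : Measurable[MeasurableSpace.comap X inferInstance] X := comap_measurable X
  have hαXm := (by fun_prop : Measurable fun x : Fin k → ℝ => α.transpose.mulVec x).comp hXm
  have hP : IsPropensityScore (MeasurableSpace.comap X inferInstance) μ D (fun ω => p (X ω)) c :=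
    ⟨hX.comap_le, hD01, hD, (hp.comp hXm).stronglyMeasurable, hpX, hc, hoverlap⟩
  have hm₁ : MeasurableSpace.comap X₁ inferInstance ≤ MeasurableSpace.comap X inferInstance := by
    rw [show X₁ = (fun x i => x (Fin.castLE hlk.le i)) ∘ X from funext₂ hX₁,
      ← MeasurableSpace.comap_comp]
    exact MeasurableSpace.comap_mono (by fun_prop : Measurable _).comap_le
  have hη₁ (y : ℝ) := (hη1 y).trans (ite_sub_div_eq_indicator q1 τ f1 y)
  have hη₀ (y : ℝ) := (hη0 y).trans (ite_sub_div_eq_indicator q0 τ f0 y)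
  have hh₁ := memLp_top_comp_of_eq_indicator (μ := μ) hY1 measurableSet_Iic hη₁
  have hh₀ := memLp_top_comp_of_eq_indicator (μ := μ) hY0 measurableSet_Iic hη₀
  have key := hP.condExp_sq_residual_eq_add hm₁ hh₁ hh₀
    (condExp_mul_comp_of_condIndepFun hP.le hY1 hD hD01
      (hunconf.comp measurable_snd measurable_id) measurableSet_Iic hη₁)
    (condExp_mul_comp_of_condIndepFun hP.le hY0 hD hD01
      (hunconf.comp measurable_fst measurable_id) measurableSet_Iic hη₀)
    hm1.symm hm0.symm (hm1meas.comp hXm).stronglyMeasurable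
    (hm0meas.comp hXm).stronglyMeasurable (hmα1meas.comp hαXm).stronglyMeasurable
    (hmα0meas.comp hαXm).stronglyMeasurable ((hh₁.condExp le_top).ae_eq hmα1.symm)
    ((hh₀.condExp le_top).ae_eq hmα0.symm)
  exact ⟨key, ae_le_of_ae_eq_add_condExp key (hP.ae_nonneg_mul_one_sub_mul_sq _)⟩

/-- **Corollary 2.4: SCQTE versus NCQTE variance comparison.** If `D ⟂ X | σ(αᵀX)` and
`p(X)` agrees a.s. with a `σ(αᵀX)`-measurable function, then almost surely
`E[φ₃*² | σ(X₁)] = E[φ₂² | σ(X₁)]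
  + E[ p(X)(1−p(X))·((m₁(X) − m₁ᵅ)/p(X) + (m₀(X) − m₀ᵅ)/(1−p(X)))² | σ(X₁) ]`;
in particular `σ²_scqte* ≥ σ²_ncqte*`. -/
theorem scqte_vs_ncqte_variance_comparison
    {Ω : Type*} [mΩ : MeasurableSpace Ω] [StandardBorelSpace Ω] [Nonempty Ω]
    (μ : Measure Ω) [IsProbabilityMeasure μ]
    {k l q : ℕ} (hk : 2 ≤ k) (hl : 1 ≤ l) (hlk : l < k) (hlq : l ≤ q) (hqk : q < k)
    (D : Ω → ℝ) (Y0 Y1 : Ω → ℝ) (X : Ω → Fin k → ℝ)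
    (hD : Measurable D) (hY0 : Measurable Y0) (hY1 : Measurable Y1) (hX : Measurable X)
    (hD01 : ∀ ω, D ω = 0 ∨ D ω = 1)
    (hY0int : Integrable Y0 μ) (hY1int : Integrable Y1 μ)
    (X₁ : Ω → Fin l → ℝ)
    (hX₁ : ∀ ω i, X₁ ω i = X ω (Fin.castLE hlk.le i))
    -- p(X) is a version of E[D | σ(X)]
    (p : (Fin k → ℝ) → ℝ) (hp : Measurable p)
    (hpX : (fun ω => p (X ω)) =ᵐ[μ] μ[D | MeasurableSpace.comap X inferInstance])
    -- overlap
    (c : ℝ) (hc : 0 < c)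
    (hoverlap : ∀ᵐ ω ∂μ, c ≤ p (X ω) ∧ p (X ω) ≤ 1 - c)
    -- unconfoundedness: (Y(0),Y(1)) ⟂ D | σ(X)
    (hunconf : CondIndepFun (MeasurableSpace.comap X inferInstance) hX.comap_le
      (fun ω => (Y0 ω, Y1 ω)) D μ)
    -- the linear index αᵀX
    (α : Matrix (Fin k) (Fin q) ℝ)
    (hαX : Measurable (fun ω => α.transpose.mulVec (X ω)))
    -- D ⟂ X | σ(αᵀX)
    (hconstraint : CondIndepFun
      (MeasurableSpace.comap (fun ω => α.transpose.mulVec (X ω)) inferInstance)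
      hαX.comap_le D X μ)
    -- p(X) agrees a.s. with a σ(αᵀX)-measurable function
    (pα : (Fin q → ℝ) → ℝ) (hpα : Measurable pα)
    (hppα : (fun ω => p (X ω)) =ᵐ[μ] fun ω => pα (α.transpose.mulVec (X ω)))
    (τ : ℝ) (hτ : τ ∈ Set.Ioo (0 : ℝ) 1)
    (q0 q1 : ℝ) (f0 f1 : ℝ) (hf0 : 0 < f0) (hf1 : 0 < f1)
    -- η_j(y) = (1{y ≤ q_j} − τ)/f_j
    (η0 η1 : ℝ → ℝ)
    (hη0 : ∀ y, η0 y = ((if y ≤ q0 then (1 : ℝ) else 0) - τ) / f0)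
    (hη1 : ∀ y, η1 y = ((if y ≤ q1 then (1 : ℝ) else 0) - τ) / f1)
    -- ψ = (D/p(X))·η₁(Y(1)) − ((1−D)/(1−p(X)))·η₀(Y(0))
    (ψ : Ω → ℝ)
    (hψ : ∀ ω, ψ ω = (D ω / p (X ω)) * η1 (Y1 ω)
      - ((1 - D ω) / (1 - p (X ω))) * η0 (Y0 ω))
    -- m_j(X) is a version of E[η_j(Y(j)) | σ(X)]
    (m0 m1 : (Fin k → ℝ) → ℝ) (hm0meas : Measurable m0) (hm1meas : Measurable m1)
    (hm0 : (fun ω => m0 (X ω)) =ᵐ[μ]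
      μ[(fun ω => η0 (Y0 ω)) | MeasurableSpace.comap X inferInstance])
    (hm1 : (fun ω => m1 (X ω)) =ᵐ[μ]
      μ[(fun ω => η1 (Y1 ω)) | MeasurableSpace.comap X inferInstance])
    -- n_p(X) = m₁(X)/p(X) + m₀(X)/(1−p(X))
    (np : (Fin k → ℝ) → ℝ)
    (hnp : ∀ x, np x = m1 x / p x + m0 x / (1 - p x))
    -- m_jᵅ is a version of E[η_j(Y(j)) | σ(αᵀX)]
    (mα0 mα1 : (Fin q → ℝ) → ℝ) (hmα0meas : Measurable mα0) (hmα1meas : Measurable mα1)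
    (hmα0 : (fun ω => mα0 (α.transpose.mulVec (X ω))) =ᵐ[μ]
      μ[(fun ω => η0 (Y0 ω)) |
        MeasurableSpace.comap (fun ω => α.transpose.mulVec (X ω)) inferInstance])
    (hmα1 : (fun ω => mα1 (α.transpose.mulVec (X ω))) =ᵐ[μ]
      μ[(fun ω => η1 (Y1 ω)) |
        MeasurableSpace.comap (fun ω => α.transpose.mulVec (X ω)) inferInstance])
    -- e_p = m₁ᵅ/p(X) + m₀ᵅ/(1−p(X))
    (ep : Ω → ℝ)
    (hep : ∀ ω, ep ω = mα1 (α.transpose.mulVec (X ω)) / p (X ω)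
      + mα0 (α.transpose.mulVec (X ω)) / (1 - p (X ω)))
    -- ε = D − p(X)
    (ε : Ω → ℝ) (hε : ∀ ω, ε ω = D ω - p (X ω))
    -- φ₂ = ψ − n_p(X)·ε
    (φ₂ : Ω → ℝ) (hφ₂ : ∀ ω, φ₂ ω = ψ ω - np (X ω) * ε ω)
    -- φ₃* = ψ − e_p·ε
    (φ₃ : Ω → ℝ) (hφ₃ : ∀ ω, φ₃ ω = ψ ω - ep ω * ε ω) :
    (μ[(fun ω => (φ₃ ω) ^ 2) | MeasurableSpace.comap X₁ inferInstance]
        =ᵐ[μ]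
      μ[(fun ω => (φ₂ ω) ^ 2) | MeasurableSpace.comap X₁ inferInstance]
        + μ[(fun ω => p (X ω) * (1 - p (X ω))
            * ((m1 (X ω) - mα1 (α.transpose.mulVec (X ω))) / p (X ω)
              + (m0 (X ω) - mα0 (α.transpose.mulVec (X ω))) / (1 - p (X ω))) ^ 2) |
            MeasurableSpace.comap X₁ inferInstance])
      ∧
    (∀ᵐ ω ∂μ,
      (μ[(fun ω' => (φ₂ ω') ^ 2) | MeasurableSpace.comap X₁ inferInstance]) ω
        ≤ (μ[(fun ω' => (φ₃ ω') ^ 2) | MeasurableSpace.comap X₁ inferInstance]) ω) :=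
  scqte_vs_ncqte_variance_comparison_general (mΩ := mΩ) μ hlk D Y0 Y1 X hD hY0 hY1 hX hD01 X₁ hX₁ p
    hp hpX c hc hoverlap hunconf α τ q0 q1 f0 f1 η0 η1 hη0 hη1 ψ hψ m0 m1 hm0meas hm1meas hm0 hm1 np
    hnp mα0 mα1 hmα0meas hmα1meas hmα0 hmα1 ep hep ε hε φ₂ hφ₂ φ₃ hφ₃
end
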